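/- Generic regret bound, per-period form (Lemma 1): Let τ : E → ℝ with τ_e ≥ 0 for all e, let a be an equilibrium assignment under τ with edge flow x, and let b be any capacity-feasible assignment. Then (total system cost of a) − (total system cost of b) ≤ Σ_{e∈E} τ_e (c_e − x_e). -/

import Mathlib

/-!
Every user weakly prefers, under the tolls, their equilibrium option to their option in `b`.
Summing over users, the tolls contribute `Σ_e τ_e x_e` on the equilibrium side and
`Σ_e τ_e x^b_e ≤ Σ_e τ_e c_e` on the other, because `b` respects capacities and `τ ≥ 0`.
-/

open Finset

/-- System (untolled) cost incurred by a single user with value of time `vu` and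
outside-option cost `lamu`, given their chosen option (a path or the outside option). -/
noncomputable def sysCost {E : Type*} (l : E → ℝ) (vu lamu : ℝ) : Option (Finset E) → ℝ
  | some P => vu * ∑ e ∈ P, l e
  | none   => lamu

/-- Travel cost (including tolls) incurred by a single user, given their chosen option. -/
noncomputable def userCost {E : Type*} (l τ : E → ℝ) (vu lamu : ℝ) : Option (Finset E) → ℝ
  | some P => vu * ∑ e ∈ P, l e + ∑ e ∈ P, τ e
  | none   => lamu

/-- Total system cost of an assignment. -/
noncomputable def totalCost {E U : Type*} [Fintype U] (l : E → ℝ) (v lam : U → ℝ)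
    (a : U → Option (Finset E)) : ℝ :=
  ∑ u, sysCost l (v u) (lam u) (a u)

/-- Edge flow of an assignment: the number of users whose chosen path contains `e`. -/
noncomputable def edgeFlow {E U : Type*} [Fintype U] [DecidableEq E]
    (a : U → Option (Finset E)) (e : E) : ℝ :=
  ∑ u, (match a u with
    | some P => if e ∈ P then (1 : ℝ) else 0
    | none => 0)

noncomputable def tollCost {E : Type*} (τ : E → ℝ) : Option (Finset E) → ℝ
  | some P => ∑ e ∈ P, τ e
  | none   => 0

lemma userCost_eq_sysCost_add_tollCost {E : Type*} (l τ : E → ℝ) (vu lamu : ℝ)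
    (o : Option (Finset E)) :
    userCost l τ vu lamu o = sysCost l vu lamu o + tollCost τ o := by
  cases o <;> simp [userCost, sysCost, tollCost]

lemma sum_tollCost_eq_sum_mul_edgeFlow {E U : Type*} [Fintype E] [DecidableEq E] [Fintype U]
    (τ : E → ℝ) (a : U → Option (Finset E)) :
    ∑ u, tollCost τ (a u) = ∑ e, τ e * edgeFlow a e := by
  simp only [edgeFlow, mul_sum]
  rw [sum_comm]
  refine sum_congr rfl fun u _ => ?_
  cases a u <;> simp [tollCost, mul_ite, sum_ite_mem]

lemma userCost_le_of_eq_min {E : Type*} {l τ : E → ℝ} {vu lamu : ℝ}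
    {paths : Finset (Finset E)} (hpaths : paths.Nonempty) {o : Option (Finset E)}
    (ho : userCost l τ vu lamu o =
      min lamu (paths.inf' hpaths fun P => vu * ∑ e ∈ P, l e + ∑ e ∈ P, τ e))
    {o' : Option (Finset E)} (ho' : ∀ P, o' = some P → P ∈ paths) :
    userCost l τ vu lamu o ≤ userCost l τ vu lamu o' := by
  rw [ho]
  cases o' with
  | none => exact min_le_left _ _
  | some P => exact (min_le_right _ _).trans (inf'_le _ (ho' P rfl))

lemma totalCost_add_tollRevenue_le {E U : Type*} [Fintype E] [DecidableEq E] [Fintype U]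
    (l τ : E → ℝ) (v lam : U → ℝ) {a b : U → Option (Finset E)}
    (hab : ∀ u, userCost l τ (v u) (lam u) (a u) ≤ userCost l τ (v u) (lam u) (b u)) :
    totalCost l v lam a + ∑ e, τ e * edgeFlow a e ≤
      totalCost l v lam b + ∑ e, τ e * edgeFlow b e := by
  simp only [totalCost, ← sum_tollCost_eq_sum_mul_edgeFlow, ← sum_add_distrib,
    ← userCost_eq_sysCost_add_tollCost]
  exact sum_le_sum fun u _ => hab u

theorem generic_regret_bound_general
    {E U : Type*} [Fintype E] [DecidableEq E] [Fintype U]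
    (l c : E → ℝ)
    (v lam : U → ℝ)
    (paths : U → Finset (Finset E)) (hpaths : ∀ u, (paths u).Nonempty)
    (τ : E → ℝ) (hτ : ∀ e, 0 ≤ τ e)
    (a : U → Option (Finset E))
    (heq : ∀ u, userCost l τ (v u) (lam u) (a u) =
      min (lam u) ((paths u).inf' (hpaths u) fun P => v u * ∑ e ∈ P, l e + ∑ e ∈ P, τ e))
    (b : U → Option (Finset E)) (hb : ∀ u P, b u = some P → P ∈ paths u)
    (hbcap : ∀ e, edgeFlow b e ≤ c e) :
    totalCost l v lam a - totalCost l v lam b ≤ ∑ e, τ e * (c e - edgeFlow a e) := by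
  have hcost := totalCost_add_tollRevenue_le l τ v lam fun u =>
    userCost_le_of_eq_min (hpaths u) (heq u) (hb u)
  calc totalCost l v lam a - totalCost l v lam b
      ≤ ∑ e, τ e * edgeFlow b e - ∑ e, τ e * edgeFlow a e := by linarith
    _ ≤ ∑ e, τ e * c e - ∑ e, τ e * edgeFlow a e := by
      gcongr with e
      · exact hτ e
      · exact hbcap e
    _ = ∑ e, τ e * (c e - edgeFlow a e) := by simp only [mul_sub, sum_sub_distrib]

/-- **Generic regret bound, per-period form** (Lemma 1): for an equilibrium assignment `a`
under nonnegative tolls `τ` with edge flow `x`, and any capacity-feasible assignment `b`,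
the cost difference is bounded by `Σ_e τ_e (c_e − x_e)`. -/
theorem generic_regret_bound
    {E U : Type*} [Fintype E] [Nonempty E] [DecidableEq E] [Fintype U]
    (l c : E → ℝ) (hl : ∀ e, 0 ≤ l e) (hc : ∀ e, 0 ≤ c e)
    (v lam : U → ℝ) (hv : ∀ u, 0 ≤ v u) (hlam : ∀ u, 0 ≤ lam u)
    (paths : U → Finset (Finset E)) (hpaths : ∀ u, (paths u).Nonempty)
    (τ : E → ℝ) (hτ : ∀ e, 0 ≤ τ e)
    (a : U → Option (Finset E)) (ha : ∀ u P, a u = some P → P ∈ paths u)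
    (heq : ∀ u, userCost l τ (v u) (lam u) (a u) =
      min (lam u) ((paths u).inf' (hpaths u) fun P => v u * ∑ e ∈ P, l e + ∑ e ∈ P, τ e))
    (b : U → Option (Finset E)) (hb : ∀ u P, b u = some P → P ∈ paths u)
    (hbcap : ∀ e, edgeFlow b e ≤ c e) :
    totalCost l v lam a - totalCost l v lam b ≤ ∑ e, τ e * (c e - edgeFlow a e) :=
  generic_regret_bound_general l c v lam paths hpaths τ hτ a heq b hb hbcap
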